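/- arXiv:1406.7453 — 2 statements merged into one kernel-verified Lean document; each statement's English description precedes it below -/
import Mathlib

section
/- For every positive integer k, the simple graph H = \overline{K}_{k+1} ∨ K_{2k-1} (the join of an independent set of k+1 vertices with a complete graph on 2k-1 vertices) has 3k vertices and minimum degree δ(H) = 2k−1, but H does not contain k pairwise vertex-disjoint cycles. -/
open SimpleGraph

/-- `k` pairwise vertex-disjoint cycles in a simple graph (each cycle has ≥ 3 vertices). -/
def HasDisjCycles {V : Type*} (G : SimpleGraph V) (k : ℕ) : Prop :=
  ∃ (f : Fin k → V) (c : ∀ i, G.Walk (f i) (f i)),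
    (∀ i, (c i).IsCycle) ∧
    ∀ i j, i ≠ j → ∀ x, x ∈ (c i).support → x ∉ (c j).support

/-- The join `G ∨ H` of two simple graphs on disjoint vertex sets. -/
def graphJoin {α β : Type*} (G : SimpleGraph α) (H : SimpleGraph β) : SimpleGraph (α ⊕ β) where
  Adj x y :=
    match x, y with
    | Sum.inl a, Sum.inl b => G.Adj a b
    | Sum.inr a, Sum.inr b => H.Adj a b
    | _, _ => True
  symm := by
    constructor
    rintro (a|a) (b|b) h
    · exact G.adj_symm h
    · trivial
    · trivial
    · exact H.adj_symm h
  loopless := by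
    constructor
    rintro (a|a) h
    · exact G.irrefl h
    · exact H.irrefl h

/-- The disjoint union `G ∪ H` of two simple graphs on disjoint vertex sets. -/
def graphSum {α β : Type*} (G : SimpleGraph α) (H : SimpleGraph β) : SimpleGraph (α ⊕ β) where
  Adj x y :=
    match x, y with
    | Sum.inl a, Sum.inl b => G.Adj a b
    | Sum.inr a, Sum.inr b => H.Adj a b
    | _, _ => False
  symm := by
    constructor
    rintro (a|a) (b|b) h
    · exact G.adj_symm h
    · exact h.elim
    · exact h.elim
    · exact H.adj_symm h
  loopless := by
    constructor
    rintro (a|a) h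
    · exact G.irrefl h
    · exact H.irrefl h

/-- The graph `Y_{h,t} = K̄_h ∨ (K_t ∪ K_t)`. -/
def Ygraph (h t : ℕ) : SimpleGraph (Fin h ⊕ (Fin t ⊕ Fin t)) :=
  graphJoin (⊥ : SimpleGraph (Fin h)) (graphSum (⊤ : SimpleGraph (Fin t)) (⊤ : SimpleGraph (Fin t)))

/-- The wheel `K_1 ∨ C_t`. -/
def wheelGraph (t : ℕ) : SimpleGraph (Fin 1 ⊕ Fin t) :=
  graphJoin (⊤ : SimpleGraph (Fin 1)) (SimpleGraph.cycleGraph t)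

/-- A graph is a wheel if it is isomorphic to `K_1 ∨ C_t` for some `t ≥ 3`. -/
def IsWheel {V : Type*} (G : SimpleGraph V) : Prop :=
  ∃ t, 3 ≤ t ∧ Nonempty (G ≃g wheelGraph t)

/-- The independence number of a graph. -/
noncomputable def indepNum {V : Type*} [Fintype V] (G : SimpleGraph V) : ℕ :=
  sSup {m | ∃ S : Set V, S.Pairwise (fun u v => ¬ G.Adj u v) ∧ S.ncard = m}

/-- The maximum size of a matching in a graph. -/
noncomputable def matchNum {V : Type*} [Fintype V] (F : SimpleGraph V) : ℕ :=
  sSup {m | ∃ M : Set (Sym2 V), M ⊆ F.edgeSet ∧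
    (M.Pairwise fun e f => ∀ v, v ∈ e → v ∉ f) ∧ M.ncard = m}

/-- `k` pairwise vertex-disjoint cycles in a multigraph given by underlying simple graph `G`,
loop set `L` and strong-edge set `D`: a cycle is a loop vertex, a strong edge, or a
cycle of `G` on at least 3 vertices. -/
def MultiHasDisjCycles {V : Type*} (G : SimpleGraph V) (L : Set V) (D : Set (Sym2 V))
    (k : ℕ) : Prop :=
  ∃ C : Fin k → Set V,
    (∀ i j, i ≠ j → Disjoint (C i) (C j)) ∧
    ∀ i,
      (∃ v ∈ L, C i = {v}) ∨
      (∃ e ∈ D, C i = {v | v ∈ e}) ∨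
      (∃ (v : V) (w : G.Walk v v), w.IsCycle ∧ C i = {x | x ∈ w.support})

/-- `k` pairwise vertex-disjoint cycles in a loopless multigraph given by underlying simple
graph `G` and strong-edge set `D`: a cycle is a strong edge or a cycle of `G`. -/
def MGHasDisjCycles {V : Type*} (G : SimpleGraph V) (D : Set (Sym2 V)) (k : ℕ) : Prop :=
  ∃ C : Fin k → Set V,
    (∀ i j, i ≠ j → Disjoint (C i) (C j)) ∧
    ∀ i,
      (∃ e ∈ D, C i = {v | v ∈ e}) ∨
      (∃ (v : V) (w : G.Walk v v), w.IsCycle ∧ C i = {x | x ∈ w.support})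

/-- The simple graph formed by the strong edges `D` avoiding the loop vertices `L`. -/
def strongGraphOff {V : Type*} (D : Set (Sym2 V)) (L : Set V) : SimpleGraph V where
  Adj u v := u ≠ v ∧ s(u, v) ∈ D ∧ u ∉ L ∧ v ∉ L
  symm := by
    constructor
    rintro u v ⟨h1, h2, h3, h4⟩
    exact ⟨h1.symm, by rwa [Sym2.eq_swap], h4, h3⟩
  loopless := by constructor; rintro u ⟨h, -⟩; exact h rfl

/-- `H` restricted to `A` has a perfect matching: a set of edges of `H` inside `A`
covering every vertex of `A` exactly once. -/
def HasPerfectMatchingOn {V : Type*} (H : SimpleGraph V) (A : Set V) : Prop :=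
  ∃ M : Set (Sym2 V), M ⊆ H.edgeSet ∧ (∀ e ∈ M, ∀ v, v ∈ e → v ∈ A) ∧
    ∀ v ∈ A, ∃! e, e ∈ M ∧ v ∈ e

/-- `G` is `k`-connected. -/
def IsKConnected {V : Type*} [Fintype V] (G : SimpleGraph V) (k : ℕ) : Prop :=
  k < Fintype.card V ∧ ∀ S : Set V, S.ncard < k → (G.induce Sᶜ).Connected

/-!
Every cycle meets the complement of an independent set in at least two vertices: if a cycle
vertex lies in the set, its two cycle-neighbours do not; otherwise any two consecutive cycle
vertices will do. In `H` the `k + 1` vertices of `K̄_{k+1}` are independent, so `k` disjoint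
cycles would need `2k` vertices of `K_{2k-1}`.
-/

namespace SimpleGraph

variable {α β : Type*} (G : SimpleGraph α) (H : SimpleGraph β)

lemma neighborSet_graphJoin_inl (a : α) :
    (graphJoin G H).neighborSet (Sum.inl a) = Sum.inl '' G.neighborSet a ∪ Set.range Sum.inr := by
  ext (x | x) <;> simp [graphJoin]

lemma neighborSet_graphJoin_inr (b : β) :
    (graphJoin G H).neighborSet (Sum.inr b) = Set.range Sum.inl ∪ Sum.inr '' H.neighborSet b := by
  ext (x | x) <;> simp [graphJoin]

variable [Finite α] [Finite β]

lemma ncard_neighborSet_graphJoin_inl (a : α) :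
    ((graphJoin G H).neighborSet (Sum.inl a)).ncard = (G.neighborSet a).ncard + Nat.card β := by
  rw [neighborSet_graphJoin_inl, Set.ncard_union_eq (Set.disjoint_left.2 (by simp)),
    Set.ncard_image_of_injective _ Sum.inl_injective, Set.ncard_range_of_injective Sum.inr_injective]

lemma ncard_neighborSet_graphJoin_inr (b : β) :
    ((graphJoin G H).neighborSet (Sum.inr b)).ncard = Nat.card α + (H.neighborSet b).ncard := by
  rw [neighborSet_graphJoin_inr, Set.ncard_union_eq (Set.disjoint_left.2 (by simp)),
    Set.ncard_image_of_injective _ Sum.inr_injective, Set.ncard_range_of_injective Sum.inl_injective]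

end SimpleGraph

lemma isIndepSet_range_inl_graphJoin_bot {α β : Type*} (H : SimpleGraph β) :
    (graphJoin (⊥ : SimpleGraph α) H).IsIndepSet (Set.range Sum.inl) := by
  rintro _ ⟨a, rfl⟩ _ ⟨b, rfl⟩ _
  simp [graphJoin]

namespace SimpleGraph.Walk.IsCycle

variable {V : Type*} {G : SimpleGraph V} {u v : V} {p : G.Walk u u}

lemma exists_adj_toSubgraph_ne (hp : p.IsCycle) (hv : v ∈ p.support) (x : V) :
    ∃ y, p.toSubgraph.Adj v y ∧ y ≠ x := by
  obtain ⟨y, z, hyz, hN⟩ := Set.ncard_eq_two.1 (hp.ncard_neighborSet_toSubgraph_eq_two hv)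
  have hy : p.toSubgraph.Adj v y := by simp [← Subgraph.mem_neighborSet, hN]
  have hz : p.toSubgraph.Adj v z := by simp [← Subgraph.mem_neighborSet, hN]
  by_cases hyx : y = x
  · exact ⟨z, hz, hyx ▸ hyz.symm⟩
  · exact ⟨y, hy, hyx⟩

lemma exists_ne_mem_support_notMem_of_isIndepSet (hp : p.IsCycle) {s : Set V}
    (hs : G.IsIndepSet s) :
    ∃ x y, x ≠ y ∧ x ∈ p.support ∧ y ∈ p.support ∧ x ∉ s ∧ y ∉ s := by
  have hout : ∀ {x y}, p.toSubgraph.Adj x y → x ∈ s → y ∉ s := fun hxy hx hy =>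
    hs hx hy hxy.adj_sub.ne hxy.adj_sub
  by_cases hS : ∃ x ∈ p.support, x ∈ s
  · obtain ⟨x, hx, hxs⟩ := hS
    obtain ⟨y, hxy, -⟩ := hp.exists_adj_toSubgraph_ne hx x
    obtain ⟨z, hxz, hzy⟩ := hp.exists_adj_toSubgraph_ne hx y
    exact ⟨z, y, hzy, mem_support_of_adj_toSubgraph hxz.symm,
      mem_support_of_adj_toSubgraph hxy.symm, hout hxz hxs, hout hxy hxs⟩
  · push Not at hS
    obtain ⟨y, huy, -⟩ := hp.exists_adj_toSubgraph_ne p.start_mem_support u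
    have hy := mem_support_of_adj_toSubgraph huy.symm
    exact ⟨u, y, huy.adj_sub.ne, p.start_mem_support, hy, hS _ p.start_mem_support, hS _ hy⟩

end SimpleGraph.Walk.IsCycle

lemma two_mul_le_ncard_compl_of_hasDisjCycles {V : Type*} [Finite V] {G : SimpleGraph V}
    {s : Set V} (hs : G.IsIndepSet s) {k : ℕ} (hG : HasDisjCycles G k) :
    2 * k ≤ sᶜ.ncard := by
  obtain ⟨f, c, hc, hdisj⟩ := hG
  choose x y hxy hx hy hxs hys using
    fun i => (hc i).exists_ne_mem_support_notMem_of_isIndepSet hs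
  let g : Fin k × Bool → (sᶜ : Set V) := fun ib =>
    bif ib.2 then ⟨x ib.1, hxs ib.1⟩ else ⟨y ib.1, hys ib.1⟩
  have hg_mem : ∀ ib, (g ib : V) ∈ (c ib.1).support := by
    rintro ⟨i, _ | _⟩
    exacts [hy i, hx i]
  have hg : Function.Injective g := by
    rintro ⟨i, b⟩ ⟨j, b'⟩ h
    obtain rfl : i = j := by
      by_contra hij
      exact hdisj i j hij _ (hg_mem (i, b)) (h ▸ hg_mem (j, b'))
    cases b <;> cases b' <;> simp only [g, cond_true, cond_false, Subtype.mk.injEq] at h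
    exacts [rfl, absurd h.symm (hxy i), absurd h (hxy i), rfl]
  simpa [← Nat.card_coe_set_eq, mul_comm] using Nat.card_le_card_of_injective g hg

/-- The graph `H = K̄_{k+1} ∨ K_{2k-1}` has `3k` vertices and minimum degree `2k - 1`,
but has no `k` disjoint cycles. -/
theorem extremal_example (k : ℕ) (hk : 0 < k) :
    let H : SimpleGraph (Fin (k + 1) ⊕ Fin (2 * k - 1)) :=
      graphJoin (⊥ : SimpleGraph (Fin (k + 1))) (⊤ : SimpleGraph (Fin (2 * k - 1)))
    Fintype.card (Fin (k + 1) ⊕ Fin (2 * k - 1)) = 3 * k ∧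
      (∀ v, 2 * k - 1 ≤ (H.neighborSet v).ncard) ∧
      (∃ v, (H.neighborSet v).ncard = 2 * k - 1) ∧
      ¬ HasDisjCycles H k := by
  intro H
  have hinl : ∀ a, (H.neighborSet (Sum.inl a)).ncard = 2 * k - 1 := fun a => by
    simp [H, ncard_neighborSet_graphJoin_inl]
  have hinr : ∀ b, (H.neighborSet (Sum.inr b)).ncard = k + 1 + (2 * k - 1 - 1) := fun b => by
    rw [ncard_neighborSet_graphJoin_inr, neighborSet_top, Set.ncard_compl, Set.ncard_singleton]
    simp
  refine ⟨by simp only [Fintype.card_sum, Fintype.card_fin]; omega, ?_, ⟨Sum.inl 0, hinl 0⟩, fun hH => ?_⟩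
  · rintro (a | b)
    · exact (hinl a).ge
    · rw [hinr]; omega
  · have := two_mul_le_ncard_compl_of_hasDisjCycles (isIndepSet_range_inl_graphJoin_bot _) hH
    rw [Set.compl_range_inl, Set.ncard_range_of_injective Sum.inr_injective, Nat.card_fin] at this
    omega
end

section
/- Let k ≥ 2 and let a loopless multigraph be given by a pair (G, F), where G is a finite simple graph on n vertices and F ⊆ E(G) is the set of strong edges. Assume every vertex has at least 2k−1 neighbors in G and that G is extremal, i.e., α(G) = n − 2k + 1. If the multigraph contains k disjoint cycles, then: (1) every big set of G is incident to at least one strong edge; and (2) for any two distinct big sets I and J, it is not the case that all strong edges intersecting I ∪ J have a common endpoint outside I ∪ J. -/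
open SimpleGraph

/-! A big set `I` leaves fewer than `2k` vertices outside it, while every cycle that is not a
strong edge at `I` has two vertices outside the independent set `I`; so some cycle of the family
is a strong edge with an endpoint in `I`. For two distinct big sets `I`, `J`, the degree bound makes
every vertex of `I` adjacent to all of `Iᶜ`, which forces `I` and `J` to be disjoint. A common
endpoint `w ∉ I ∪ J` of the strong edges meeting `I ∪ J` would lie on the strong cycles through
`I` and through `J`, so these are one edge containing `w` and vertices of both `I` and `J`. -/

open scoped Function in
theorem Set.two_mul_card_le_ncard_of_nontrivial_inter {ι α : Type*} [Fintype ι]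
    {C : ι → Set α} {A : Set α} (hA : A.Finite) (hC : Pairwise (Disjoint on C))
    (h : ∀ i, (C i ∩ A).Nontrivial) : 2 * Fintype.card ι ≤ A.ncard := by
  have hfin : ∀ i, (C i ∩ A).Finite := fun i => hA.subset Set.inter_subset_right
  calc 2 * Fintype.card ι = ∑ _ : ι, 2 := by simp [mul_comm]
    _ ≤ ∑ i, (C i ∩ A).ncard := Finset.sum_le_sum fun i _ =>
        Set.one_lt_ncard_iff_nontrivial_and_finite.mpr ⟨h i, hfin i⟩
    _ = (⋃ i, C i ∩ A).ncard := by
        rw [Set.ncard_iUnion_of_finite hfin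
          fun i j hij => (hC hij).mono Set.inter_subset_left Set.inter_subset_left,
          finsum_eq_sum_of_fintype]
    _ ≤ A.ncard := Set.ncard_le_ncard (Set.iUnion_subset fun _ => Set.inter_subset_right) hA

theorem Set.ncard_compl_lt_of_ncard_eq_card_sub_add_one {α : Type*} [Finite α] {s : Set α}
    {m : ℕ} (hs : s.ncard = Nat.card α - m + 1) : sᶜ.ncard < m := by
  have := s.ncard_add_ncard_compl
  omega

namespace SimpleGraph

variable {V : Type*} {G : SimpleGraph V}

theorem Walk.IsCycle.nontrivial_support_diff_of_isIndepSet {u : V} {p : G.Walk u u}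
    (hp : p.IsCycle) {I : Set V} (hI : G.IsIndepSet I) :
    ({x | x ∈ p.support} \ I).Nontrivial := by
  classical
  by_cases hmeet : ∃ v ∈ p.support, v ∈ I
  · obtain ⟨v, hv, hvI⟩ := hmeet
    -- rotated to start at `v ∈ I`, the cycle leaves `v` and returns to it through two
    -- distinct neighbours of `v`, which lie outside `I`
    have hq : (p.rotate v hv).IsCycle := (Walk.isCycle_rotate hv).mpr hp
    have hout : ∀ x, G.Adj v x → x ∉ I := fun x hx hxI => hI hvI hxI hx.ne hx
    refine ⟨_, ⟨?_, hout _ (Walk.adj_snd hq.not_nil)⟩,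
      _, ⟨?_, hout _ (Walk.adj_penultimate hq.not_nil).symm⟩, hq.snd_ne_penultimate⟩
    · exact (Walk.mem_support_rotate_iff ..).mp (Walk.getVert_mem_support ..)
    · exact (Walk.mem_support_rotate_iff ..).mp (Walk.getVert_mem_support ..)
  · push Not at hmeet
    exact ⟨u, ⟨p.start_mem_support, hmeet _ p.start_mem_support⟩,
      p.snd, ⟨p.getVert_mem_support 1, hmeet _ (p.getVert_mem_support 1)⟩,
      (Walk.adj_snd hp.not_nil).ne⟩

theorem nontrivial_setOf_mem_diff_of_mem_edgeSet {e : Sym2 V} (he : e ∈ G.edgeSet)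
    {I : Set V} (hI : ∀ u ∈ I, u ∉ e) : ({v | v ∈ e} \ I).Nontrivial := by
  induction e using Sym2.ind with
  | _ x y =>
    exact ⟨x, ⟨Sym2.mem_mk_left x y, fun hx => hI x hx (Sym2.mem_mk_left x y)⟩,
      y, ⟨Sym2.mem_mk_right x y, fun hy => hI y hy (Sym2.mem_mk_right x y)⟩, G.ne_of_adj he⟩

theorem exists_strongEdge_cycle_mem_of_isIndepSet [Finite V] {F : Set (Sym2 V)}
    (hF : F ⊆ G.edgeSet) {k : ℕ} {C : Fin k → Set V}
    (hCd : ∀ i j, i ≠ j → Disjoint (C i) (C j))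
    (hC : ∀ i, (∃ e ∈ F, C i = {v | v ∈ e}) ∨
      ∃ (v : V) (w : G.Walk v v), w.IsCycle ∧ C i = {x | x ∈ w.support})
    {I : Set V} (hI : G.IsIndepSet I) (hIc : Iᶜ.ncard < 2 * k) :
    ∃ i, ∃ e ∈ F, C i = {v | v ∈ e} ∧ ∃ u ∈ I, u ∈ e := by
  by_contra! hnone
  have hdiff : ∀ i, (C i ∩ Iᶜ).Nontrivial := by
    intro i
    rcases hC i with ⟨e, heF, hCe⟩ | ⟨v, w, hw, hCw⟩
    · rw [hCe]
      exact nontrivial_setOf_mem_diff_of_mem_edgeSet (hF heF) (hnone i e heF hCe)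
    · rw [hCw]
      exact hw.nontrivial_support_diff_of_isIndepSet hI
  have := Set.two_mul_card_le_ncard_of_nontrivial_inter (Set.toFinite _)
    (fun i j hij => hCd i j hij) hdiff
  rw [Fintype.card_fin] at this
  omega

theorem IsIndepSet.neighborSet_eq_compl [Finite V] {I : Set V} (hI : G.IsIndepSet I) {v : V}
    (hv : v ∈ I) (hdeg : Iᶜ.ncard ≤ (G.neighborSet v).ncard) : G.neighborSet v = Iᶜ :=
  Set.eq_of_subset_of_ncard_le (fun _ hx hxI => hI hv hxI (G.ne_of_adj hx) hx) hdeg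
    (Set.toFinite _)

theorem IsIndepSet.disjoint_of_neighborSet_eq_compl [Finite V] {I J : Set V}
    (hJ : G.IsIndepSet J) (hI : ∀ v ∈ I, G.neighborSet v = Iᶜ) (hcard : I.ncard = J.ncard)
    (hIJ : I ≠ J) : Disjoint I J := by
  refine Set.disjoint_left.mpr fun p hpI hpJ => hIJ ?_
  have hJI : J ⊆ I := fun q hqJ => by_contra fun hqI =>
    hJ hpJ hqJ (ne_of_mem_of_not_mem hpI hqI) (by rwa [← mem_neighborSet, hI p hpI])
  exact (Set.eq_of_subset_of_ncard_le hJI hcard.le (Set.toFinite _)).symm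

end SimpleGraph

theorem extremal_big_sets_general {V : Type*} [Fintype V] (G : SimpleGraph V) (F : Set (Sym2 V))
    (hF : F ⊆ G.edgeSet) (k : ℕ)
    (hdeg : ∀ v : V, 2 * k - 1 ≤ (G.neighborSet v).ncard)
    (h : MGHasDisjCycles G F k) :
    (∀ I : Set V, I.Pairwise (fun u v => ¬ G.Adj u v) →
      I.ncard = Fintype.card V - 2 * k + 1 →
      ∃ e ∈ F, ∃ v ∈ I, v ∈ e) ∧
    (∀ I J : Set V, I.Pairwise (fun u v => ¬ G.Adj u v) →
      I.ncard = Fintype.card V - 2 * k + 1 →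
      J.Pairwise (fun u v => ¬ G.Adj u v) →
      J.ncard = Fintype.card V - 2 * k + 1 →
      I ≠ J →
      ¬ ∃ w, w ∉ I ∪ J ∧ ∀ e ∈ F, (∃ v ∈ I ∪ J, v ∈ e) → w ∈ e) := by
  obtain ⟨C, hCd, hC⟩ := h
  have hbig : ∀ I : Set V, I.ncard = Fintype.card V - 2 * k + 1 → Iᶜ.ncard < 2 * k :=
    fun I hI => Set.ncard_compl_lt_of_ncard_eq_card_sub_add_one (by rwa [Nat.card_eq_fintype_card])
  have hstrong := fun I (hI : G.IsIndepSet I) hIc =>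
    exists_strongEdge_cycle_mem_of_isIndepSet hF hCd hC hI (hbig I hIc)
  refine ⟨fun I hI hIc => ?_, ?_⟩
  · obtain ⟨-, e, heF, -, hu⟩ := hstrong I hI hIc
    exact ⟨e, heF, hu⟩
  rintro I J hI hIc hJ hJc hIJ ⟨w, hw, hwe⟩
  have hfull : ∀ v ∈ I, G.neighborSet v = Iᶜ := fun v hv =>
    IsIndepSet.neighborSet_eq_compl hI hv (by have := hbig I hIc; have := hdeg v; omega)
  have hdisj := IsIndepSet.disjoint_of_neighborSet_eq_compl hJ hfull (hIc.trans hJc.symm) hIJ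
  obtain ⟨i, e, heF, hCe, u, huI, hue⟩ := hstrong I hI hIc
  obtain ⟨j, e', he'F, hCe', u', hu'J, hu'e'⟩ := hstrong J hJ hJc
  have hwi : w ∈ C i := hCe ▸ hwe e heF ⟨u, .inl huI, hue⟩
  have hwj : w ∈ C j := hCe' ▸ hwe e' he'F ⟨u', .inr hu'J, hu'e'⟩
  obtain rfl : i = j := by_contra fun hij => Set.disjoint_left.mp (hCd i j hij) hwi hwj
  have hu'e : u' ∈ e := by
    have : u' ∈ C i := hCe' ▸ hu'e'
    rwa [hCe] at this
  have huw : u ≠ w := ne_of_mem_of_not_mem huI fun hwI => hw (.inl hwI)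
  rw [(Sym2.mem_and_mem_iff huw).mp ⟨hue, hwe e heF ⟨u, .inl huI, hue⟩⟩] at hu'e
  rcases Sym2.mem_iff.mp hu'e with rfl | rfl
  · exact Set.disjoint_left.mp hdisj huI hu'J
  · exact hw (.inr hu'J)

/-- In an extremal loopless multigraph `(G, F)` with `k` disjoint cycles, every big set
meets a strong edge, and no two distinct big sets have all strong edges meeting their
union share a common endpoint outside the union. -/
theorem extremal_big_sets {V : Type*} [Fintype V] (G : SimpleGraph V) (F : Set (Sym2 V))
    (hF : F ⊆ G.edgeSet) (k : ℕ) (hk : 2 ≤ k)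
    (hdeg : ∀ v : V, 2 * k - 1 ≤ (G.neighborSet v).ncard)
    (hext : _root_.indepNum G = Fintype.card V - 2 * k + 1)
    (h : MGHasDisjCycles G F k) :
    (∀ I : Set V, I.Pairwise (fun u v => ¬ G.Adj u v) →
      I.ncard = Fintype.card V - 2 * k + 1 →
      ∃ e ∈ F, ∃ v ∈ I, v ∈ e) ∧
    (∀ I J : Set V, I.Pairwise (fun u v => ¬ G.Adj u v) →
      I.ncard = Fintype.card V - 2 * k + 1 →
      J.Pairwise (fun u v => ¬ G.Adj u v) →
      J.ncard = Fintype.card V - 2 * k + 1 →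
      I ≠ J →
      ¬ ∃ w, w ∉ I ∪ J ∧ ∀ e ∈ F, (∃ v ∈ I ∪ J, v ∈ e) → w ∈ e) :=
  extremal_big_sets_general G F hF k hdeg h
end
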